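/- Let d > 2 be an integer, set 2* = 2d/(d−2), and let a, c be real numbers with c > 2 and a ≥ c·d/(c−2); let a', c' > 1 be the conjugate exponents defined by 1/a + 1/a' = 1 and 1/c + 1/c' = 1. Then there exist real numbers P, Q > 1, M > c', and β, κ with 0 < β < 1 and 0 < κ < 1 such that the following hold simultaneously: 1/M = β/P; 1/a' = 1 − β + β/Q; 1/Q = 1 − κ + 2κ/2*; and κ·P ≤ 1. -/

import Mathlib

/-! Put `t = d / (2a)`, so that `1/a' = 1 - 1/a = 1 - 2t/d`, and the hypothesis on `a` gives
`t ≤ 1/2 - 1/c < 1/c' < 1`. Since `1 - κ + 2κ/2* = 1 - 2κ/d`, any `κ` strictly between `t`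
and `1` works, with `P = 1/κ`, `β = t/κ`, `1/Q = 1 - 2κ/d` and `M = 1/t`: indeed
`1 - β + β/Q = 1 - β · 2κ/d = 1 - 2t/d`. -/

lemma one_sub_add_two_mul_div_sobolev_eq {d : ℝ} (hd : d ≠ 0) (κ : ℝ) :
    1 - κ + 2 * κ / (2 * d / (d - 2)) = 1 - 2 * κ / d := by
  rw [div_div_eq_mul_div]
  field_simp
  ring

lemma exists_exponents_of_pos_of_lt_one {d t : ℝ} (hd : 2 ≤ d) (ht₀ : 0 < t) (ht₁ : t < 1) :
    ∃ P Q β κ : ℝ, 1 < P ∧ 1 < Q ∧ 0 < β ∧ β < 1 ∧ 0 < κ ∧ κ < 1 ∧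
      t = β / P ∧ 1 - 2 * t / d = 1 - β + β / Q ∧ 1 / Q = 1 - 2 * κ / d ∧ κ * P ≤ 1 := by
  obtain ⟨κ, htκ, hκ₁⟩ := exists_between ht₁
  have hκ₀ : 0 < κ := ht₀.trans htκ
  have hd₀ : 0 < d := by linarith
  have hQ₀ : 0 < 1 - 2 * κ / d := by
    rw [sub_pos, div_lt_one hd₀]
    linarith
  have hQ₁ : 1 - 2 * κ / d < 1 := by
    have : 0 < 2 * κ / d := by positivity
    linarith
  refine ⟨κ⁻¹, (1 - 2 * κ / d)⁻¹, t / κ, κ, (one_lt_inv₀ hκ₀).mpr hκ₁,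
    (one_lt_inv₀ hQ₀).mpr hQ₁, by positivity, (div_lt_one hκ₀).mpr htκ, hκ₀, hκ₁,
    ?_, ?_, by rw [one_div, inv_inv], (mul_inv_cancel₀ hκ₀.ne').le⟩
  · field_simp
  · rw [div_inv_eq_mul]
    field_simp
    ring

lemma div_two_mul_lt_one_sub_inv {a c d : ℝ} (hc : 2 < c) (hd : 0 < d)
    (ha : c * d / (c - 2) ≤ a) : d / (2 * a) < 1 - 1 / c := by
  have hc₀ : 0 < c := by linarith
  have had : c * d ≤ a * (c - 2) := (div_le_iff₀ (by linarith)).mp ha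
  have ha₀ : 0 < a := by nlinarith
  rw [div_lt_iff₀ (by positivity), one_sub_div hc₀.ne', div_mul_eq_mul_div, lt_div_iff₀ hc₀]
  nlinarith

theorem exists_exponents_self_absorption_general
    (d : ℕ) (hd : 2 < d) (a c a' c' : ℝ)
    (hc : 2 < c) (ha : a ≥ c * d / (c - 2))
    (haa' : 1 / a + 1 / a' = 1) (hcc' : 1 / c + 1 / c' = 1) :
    ∃ P Q M β κ : ℝ, 1 < P ∧ 1 < Q ∧ c' < M ∧
      0 < β ∧ β < 1 ∧ 0 < κ ∧ κ < 1 ∧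
      1 / M = β / P ∧
      1 / a' = 1 - β + β / Q ∧
      1 / Q = 1 - κ + 2 * κ / (2 * (d : ℝ) / ((d : ℝ) - 2)) ∧
      κ * P ≤ 1 := by
  have hd₂ : (2 : ℝ) < d := by exact_mod_cast hd
  have hd₀ : (0 : ℝ) < d := by linarith
  have ha₀ : 0 < a := lt_of_lt_of_le (div_pos (by positivity) (by linarith)) ha
  set t := d / (2 * a) with ht_def
  have ht₀ : 0 < t := by positivity
  have hc' : 1 / c' = 1 - 1 / c := by linarith
  have hc'₀ : 0 < 1 / c' := by rw [hc']; linarith [one_div_lt_one_div_of_lt (by norm_num) hc]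
  have htc' : t < 1 / c' := hc' ▸ div_two_mul_lt_one_sub_inv hc hd₀ ha
  have ht₁ : t < 1 := htc'.trans (by rw [hc']; linarith [one_div_pos.mpr (by linarith : 0 < c)])
  have ha' : 1 / a' = 1 - 2 * t / d := by
    rw [show 1 / a' = 1 - 1 / a by linarith, ht_def]
    field_simp
  obtain ⟨P, Q, β, κ, hP, hQ, hβ₀, hβ₁, hκ₀, hκ₁, hM, hβQ, hκQ, hκP⟩ :=
    exists_exponents_of_pos_of_lt_one hd₂.le ht₀ ht₁
  refine ⟨P, Q, 1 / t, β, κ, hP, hQ, (lt_one_div (one_div_pos.mp hc'₀) ht₀).mpr htc',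
    hβ₀, hβ₁, hκ₀, hκ₁, by rwa [one_div_one_div], ha'.trans hβQ, ?_, hκP⟩
  rw [hκQ, one_sub_add_two_mul_div_sobolev_eq hd₀.ne']

/-- Lemma 4.9: given `c > 2`, `a ≥ c d / (c - 2)` and the conjugate exponents
`a', c' > 1`, there exist `P, Q > 1`, `M > c'` and `0 < β, κ < 1` satisfying
`1/M = β/P`, `1/a' = 1 - β + β/Q`, `1/Q = 1 - κ + 2κ/2*` with
`2* = 2d/(d-2)`, and `κ P ≤ 1`. -/
theorem exists_exponents_self_absorption
    (d : ℕ) (hd : 2 < d) (a c a' c' : ℝ)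
    (hc : 2 < c) (ha : a ≥ c * d / (c - 2))
    (ha' : 1 < a') (hc' : 1 < c')
    (haa' : 1 / a + 1 / a' = 1) (hcc' : 1 / c + 1 / c' = 1) :
    ∃ P Q M β κ : ℝ, 1 < P ∧ 1 < Q ∧ c' < M ∧
      0 < β ∧ β < 1 ∧ 0 < κ ∧ κ < 1 ∧
      1 / M = β / P ∧
      1 / a' = 1 - β + β / Q ∧
      1 / Q = 1 - κ + 2 * κ / (2 * (d : ℝ) / ((d : ℝ) - 2)) ∧
      κ * P ≤ 1 :=
  exists_exponents_self_absorption_general d hd a c a' c' hc ha haa' hcc'
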